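/- Let k ∈ ℕ, let n be a power of 2 with n > k, and let f be a formal power series over a commutative ring R. Then (δ_{k+n} ⊙ f)′ = ( δ_n ⊙ (δ_k ⊙ f)′ ) · (1 + x^n), where the prime denotes the binomial modulo 2 transform. -/

import Mathlib

/-!
The transform sums `f` over the submasks `j` of `m`: for `j ≤ m`, `(m - j) AND j = 0` holds
exactly when subtracting `j` from `m` causes no borrow, i.e. when every bit of `j` is a bit of `m`.
As `n = 2 ^ t > k`, the bits of `k + n` are those of `k` together with bit `t`, so the left side
sums `f` over the submasks of `m` that avoid `k` and bit `t`. If bit `t` of `m` is clear, no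
submask of `m` has bit `t`; if it is set, the submasks of `m` without bit `t` are the submasks of
`m - n`. This matches the right side, whose `m`-th coefficient is that of `(δ_k ⊙ f)′` at `m`
or at `m - n` according to bit `t` of `m`.
-/

/-- `δ k`: the power series whose `m`-th coefficient is `1` if `m AND k = 0`, else `0`. -/
noncomputable def delta (R : Type*) [CommRing R] (k : ℕ) : PowerSeries R :=
  PowerSeries.mk fun m => if m &&& k = 0 then 1 else 0

/-- Termwise (Hadamard) product of power series. -/
noncomputable def hadS {R : Type*} [CommRing R] (f g : PowerSeries R) : PowerSeries R :=
  PowerSeries.mk fun n => PowerSeries.coeff n f * PowerSeries.coeff n g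

/-- The binomial modulo 2 transform: `f'[n] = Σ_{0≤k≤n, (n-k) AND k = 0} f[k]`. -/
noncomputable def bmt {R : Type*} [CommRing R] (f : PowerSeries R) : PowerSeries R :=
  PowerSeries.mk fun n => ∑ k ∈ Finset.range (n + 1),
    if (n - k) &&& k = 0 then PowerSeries.coeff k f else 0

namespace Nat

theorem add_eq_or_of_and_eq_zero {a b : ℕ} (h : a &&& b = 0) : a + b = a ||| b := by
  induction a using Nat.strongRecOn generalizing b with
  | ind a ih =>
    rcases a.eq_zero_or_pos with rfl | ha
    · simp
    have hdiv := ih (a / 2) (by omega) (b := b / 2) (by rw [← Nat.and_div_two, h])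
    have hor : (a ||| b) / 2 = a / 2 ||| b / 2 := Nat.or_div_two
    have hmod : (a ||| b) % 2 = 1 ↔ a % 2 = 1 ∨ b % 2 = 1 := Nat.or_mod_two_eq_one
    have hand : ¬ (a % 2 = 1 ∧ b % 2 = 1) := fun hab => by
      simpa [h] using Nat.and_mod_two_eq_one.mpr hab
    omega

theorem and_eq_left_iff_testBit {j m : ℕ} :
    j &&& m = j ↔ ∀ i, j.testBit i = true → m.testBit i = true := by
  refine ⟨fun h i hj => ?_, fun h => Nat.eq_of_testBit_eq fun i => ?_⟩
  · rw [← h, Nat.testBit_and] at hj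
    exact (Bool.and_eq_true_iff.mp hj).2
  · rw [Nat.testBit_and]
    cases hj : j.testBit i <;> simp [h i, hj]

theorem xor_and_eq_zero_of_and_eq {j m : ℕ} (h : j &&& m = j) : (m ^^^ j) &&& j = 0 := by
  rw [Nat.and_xor_distrib_right, Nat.and_self, Nat.and_comm, h, Nat.xor_self]

theorem sub_eq_xor_of_and_eq {j m : ℕ} (h : j &&& m = j) : m - j = m ^^^ j := by
  have hor : (m ^^^ j) ||| j = m := Nat.eq_of_testBit_eq fun i => by
    have := and_eq_left_iff_testBit.mp h i
    simp only [Nat.testBit_or, Nat.testBit_xor]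
    cases hj : j.testBit i <;> cases hm : m.testBit i <;> simp_all
  have := add_eq_or_of_and_eq_zero (xor_and_eq_zero_of_and_eq h)
  omega

theorem sub_and_eq_zero_iff {j m : ℕ} (hj : j ≤ m) : (m - j) &&& j = 0 ↔ j &&& m = j := by
  refine ⟨fun h => ?_, fun h => sub_eq_xor_of_and_eq h ▸ xor_and_eq_zero_of_and_eq h⟩
  have hm : m = (m - j) ||| j := by rw [← add_eq_or_of_and_eq_zero h]; omega
  rw [hm, Nat.and_or_distrib_left, Nat.and_comm, h, Nat.zero_or, Nat.and_self]

theorem and_two_pow_eq_zero_iff {j t : ℕ} : j &&& 2 ^ t = 0 ↔ j.testBit t = false := by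
  cases h : j.testBit t <;> simp [Nat.and_two_pow, h]

theorem testBit_eq_false_of_and_eq {j m t : ℕ} (hj : j &&& m = j) (hm : m.testBit t = false) :
    j.testBit t = false :=
  Bool.eq_false_iff.mpr fun hjt => by simpa [hm] using and_eq_left_iff_testBit.mp hj t hjt

theorem and_add_two_pow_eq_zero_iff {j k t : ℕ} (hk : k < 2 ^ t) :
    j &&& (k + 2 ^ t) = 0 ↔ j &&& k = 0 ∧ j.testBit t = false := by
  rw [← Nat.or_two_pow_eq_add_of_lt hk, Nat.and_or_distrib_left, Nat.or_eq_zero_iff,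
    and_two_pow_eq_zero_iff]

theorem testBit_sub_two_pow {m t : ℕ} (h : 2 ^ t ≤ m) :
    (m - 2 ^ t).testBit t = !m.testBit t := by
  obtain ⟨x, rfl⟩ := Nat.exists_eq_add_of_le h
  simp [Nat.testBit_two_pow_add_eq]

theorem and_sub_two_pow_eq_iff {j m t : ℕ} (hm : m.testBit t = true) :
    j &&& (m - 2 ^ t) = j ↔ j &&& m = j ∧ j.testBit t = false := by
  have h2 : 2 ^ t &&& m = 2 ^ t := and_eq_left_iff_testBit.mpr fun i hi => by
    obtain rfl : t = i := by simpa [Nat.testBit_two_pow] using hi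
    exact hm
  simp only [sub_eq_xor_of_and_eq h2, and_eq_left_iff_testBit, Nat.testBit_xor,
    Nat.testBit_two_pow]
  refine ⟨fun h => ⟨fun i hi => ?_, ?_⟩, fun ⟨h, ht⟩ i hi => ?_⟩
  · rcases eq_or_ne t i with rfl | hti
    · exact absurd (h t hi) (by simp [hm])
    · simpa [hti] using h i hi
  · cases hjt : j.testBit t
    · rfl
    · exact absurd (h t hjt) (by simp [hm])
  · have hti : t ≠ i := by rintro rfl; simp_all
    simpa [hti] using h i hi

end Nat

open PowerSeries Finset

def submasks (m : ℕ) : Finset ℕ := (range (m + 1)).filter fun j => j &&& m = j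

theorem mem_submasks {j m : ℕ} : j ∈ submasks m ↔ j &&& m = j := by
  refine ⟨fun h => (mem_filter.mp h).2, fun h => mem_filter.mpr ⟨?_, h⟩⟩
  exact mem_range.mpr (Nat.lt_succ_of_le (h ▸ Nat.and_le_right))

section

variable {R : Type*} [CommRing R]

theorem coeff_delta (k m : ℕ) : coeff m (delta R k) = if m &&& k = 0 then 1 else 0 :=
  coeff_mk _ _

theorem coeff_hadS (f g : PowerSeries R) (m : ℕ) :
    coeff m (hadS f g) = coeff m f * coeff m g :=
  coeff_mk _ _

theorem coeff_bmt (f : PowerSeries R) (m : ℕ) :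
    coeff m (bmt f) = ∑ j ∈ submasks m, coeff j f := by
  rw [bmt, coeff_mk, submasks, sum_filter]
  refine sum_congr rfl fun j hj => ?_
  exact if_congr (Nat.sub_and_eq_zero_iff (Nat.lt_succ_iff.mp (mem_range.mp hj))) rfl rfl

theorem coeff_bmt_hadS_delta (k : ℕ) (f : PowerSeries R) (m : ℕ) :
    coeff m (bmt (hadS (delta R k) f)) =
      ∑ j ∈ (submasks m).filter (· &&& k = 0), coeff j f := by
  simp only [coeff_bmt, coeff_hadS, coeff_delta, ite_mul, one_mul, zero_mul, sum_filter]

theorem coeff_hadS_delta_two_pow_mul_one_add_X_pow (t : ℕ) (g : PowerSeries R) (m : ℕ) :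
    coeff m (hadS (delta R (2 ^ t)) g * (1 + X ^ 2 ^ t)) =
      if m.testBit t then coeff (m - 2 ^ t) g else coeff m g := by
  simp only [mul_add, mul_one, map_add, coeff_mul_X_pow', coeff_hadS, coeff_delta,
    Nat.and_two_pow_eq_zero_iff]
  cases hm : m.testBit t
  · simp only [if_true, one_mul, Bool.false_eq_true, if_false, add_eq_left]
    refine ite_eq_right_iff.mpr fun hle => ?_
    simp [Nat.testBit_sub_two_pow hle, hm]
  · have hle := Nat.ge_two_pow_of_testBit hm
    simp [hle, Nat.testBit_sub_two_pow hle, hm]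

end

/-- Let k ∈ ℕ, n a power of 2 with n > k, and f a power series. Then
(δ (k+n) ⊙ f)' = (δ n ⊙ (δ k ⊙ f)') * (1 + x^n). -/
theorem bmt_delta_add (R : Type*) [CommRing R] (k n : ℕ) (hn : ∃ t : ℕ, n = 2 ^ t)
    (hkn : k < n) (f : PowerSeries R) :
    bmt (hadS (delta R (k + n)) f) =
      hadS (delta R n) (bmt (hadS (delta R k) f)) * (1 + PowerSeries.X ^ n) := by
  obtain ⟨t, rfl⟩ := hn
  ext m
  simp only [coeff_hadS_delta_two_pow_mul_one_add_X_pow, coeff_bmt_hadS_delta]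
  split_ifs with hm <;> congr 1 <;> ext j <;>
    simp only [mem_filter, mem_submasks, Nat.and_add_two_pow_eq_zero_iff hkn]
  · rw [Nat.and_sub_two_pow_eq_iff hm]
    tauto
  · have hjt (hj : j &&& m = j) := Nat.testBit_eq_false_of_and_eq hj (Bool.eq_false_iff.mpr hm)
    tauto
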